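/- Inner-product bound for DIANA-NASTYA: Suppose Q is a compression operator with parameter ω > 0, f is μ-strongly convex, each f_m^i is convex and L_max-smooth. Then in round t of DIANA-NASTYA, with h* = ∇f(x*), −E_Q[(1/M)Σ_{m=1}^M ⟨ĝ_{t,m} − h*, x_t − x*⟩] ≤ −(μ/4)‖x_t − x*‖² − (1/2)(f(x_t) − f(x*)) − (1/(Mn))Σ_{m=1}^M Σ_{i=0}^{n−1} D_{f_m^{π_m(i)}}(x*, x_{t,m}^i) + (L_max/(2Mn))Σ_{m=1}^M Σ_{i=0}^{n−1}‖x_t − x_{t,m}^i‖², where E_Q denotes expectation over the compression randomness at round t. -/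

import Mathlib

open MeasureTheory ProbabilityTheory Finset

/-!
Unbiasedness of the compressor turns the expected estimator `ĝ_{t,m}` into the local average
`g_{t,m}`, which telescopes to `(1/n) Σ_i ∇f_m^{π_m(i)}(x_{t,m}^i)`, while `h* = ∇f(x*) = 0`.
For each local step, the descent lemma at `y = x_{t,m}^i` rewritten with the Bregman divergence
gives `⟨∇φ(y), x_t − x*⟩ ≥ φ(x_t) − φ(x*) + D_φ(x*, y) − (L/2)‖x_t − y‖²`. Averaging over `i`
and `m` (the permutations only reorder the sums) produces `f(x_t) − f(x*)`, half of which is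
traded for `(μ/4)‖x_t − x*‖²` by the quadratic growth of a strongly convex function at its
minimizer.
-/

/-- Bregman divergence `D_h(x, y) = h(x) − h(y) − ⟨∇h(y), x − y⟩` of a function `h`
with gradient field `h'`. -/
noncomputable def breg {d : ℕ} (h : EuclideanSpace ℝ (Fin d) → ℝ)
    (h' : EuclideanSpace ℝ (Fin d) → EuclideanSpace ℝ (Fin d))
    (x y : EuclideanSpace ℝ (Fin d)) : ℝ :=
  h x - h y - (inner ℝ (h' y) (x - y) : ℝ)

section Gradient

variable {E : Type*} [NormedAddCommGroup E] [InnerProductSpace ℝ E] [CompleteSpace E]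

theorem HasGradientAt.fun_sum {ι : Type*} {s : Finset ι} {F : ι → E → ℝ} {G : ι → E} {x : E}
    (hF : ∀ i ∈ s, HasGradientAt (F i) (G i) x) :
    HasGradientAt (fun y ↦ ∑ i ∈ s, F i y) (∑ i ∈ s, G i) x := by
  rw [hasGradientAt_iff_hasFDerivAt, map_sum]
  exact HasFDerivAt.fun_sum fun i hi ↦ (hF i hi).hasFDerivAt

theorem HasGradientAt.const_mul {F : E → ℝ} {G x : E} (hF : HasGradientAt F G x) (c : ℝ) :
    HasGradientAt (fun y ↦ c * F y) (c • G) x := by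
  rw [hasGradientAt_iff_hasFDerivAt, map_smul]
  exact hF.hasFDerivAt.const_mul c

theorem IsLocalMin.hasGradientAt_eq_zero {F : E → ℝ} {G x : E} (hmin : IsLocalMin F x)
    (hF : HasGradientAt F G x) : G = 0 := by
  simpa using hmin.hasFDerivAt_eq_zero hF.hasFDerivAt

theorem le_add_inner_add_sq_of_lipschitz_gradient {φ : E → ℝ} {G : E → E}
    (hφ : ∀ x, HasGradientAt φ (G x) x) {L : ℝ} (hG : ∀ x y, ‖G x - G y‖ ≤ L * ‖x - y‖)
    (a b : E) :
    φ b ≤ φ a + inner ℝ (G a) (b - a) + L / 2 * ‖b - a‖ ^ 2 := by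
  set v := b - a
  set ψ : ℝ → ℝ := fun t ↦ φ (a + t • v) - t * inner ℝ (G a) v - L / 2 * t ^ 2 * ‖v‖ ^ 2
  have hψ : ∀ t, HasDerivAt ψ
      (inner ℝ (G (a + t • v) - G a) v - L * t * ‖v‖ ^ 2) t := by
    intro t
    have hline : HasDerivAt (fun s : ℝ ↦ a + s • v) v t := by
      simpa using ((hasDerivAt_id t).smul_const v).const_add a
    have hφline := (hφ (a + t • v)).hasFDerivAt.comp_hasDerivAt t hline
    simp only [InnerProductSpace.toDual_apply_apply] at hφline
    refine ((hφline.sub ((hasDerivAt_id t).mul_const (inner ℝ (G a) v))).sub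
      (((hasDerivAt_pow 2 t).const_mul (L / 2)).mul_const (‖v‖ ^ 2))).congr_deriv ?_
    simp only [inner_sub_left]
    ring
  have hanti : AntitoneOn ψ (Set.Ici 0) := by
    refine antitoneOn_of_hasDerivWithinAt_nonpos (convex_Ici 0)
      (fun t _ ↦ (hψ t).continuousAt.continuousWithinAt) (fun t _ ↦ (hψ t).hasDerivWithinAt) ?_
    intro t ht
    rw [interior_Ici, Set.mem_Ioi] at ht
    calc inner ℝ (G (a + t • v) - G a) v - L * t * ‖v‖ ^ 2
        ≤ ‖G (a + t • v) - G a‖ * ‖v‖ - L * t * ‖v‖ ^ 2 := by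
          gcongr; exact real_inner_le_norm _ _
      _ ≤ L * ‖t • v‖ * ‖v‖ - L * t * ‖v‖ ^ 2 := by
          gcongr; simpa using hG (a + t • v) a
      _ = 0 := by rw [norm_smul, Real.norm_of_nonneg ht.le]; ring
  have := hanti (Set.mem_Ici.2 le_rfl) (Set.mem_Ici.2 zero_le_one) zero_le_one
  simp only [ψ, v, one_smul, zero_smul, add_zero, add_sub_cancel] at this
  linarith

end Gradient

theorem StrongConvexOn.half_mul_sq_norm_sub_le_of_isMinOn {E : Type*} [NormedAddCommGroup E]
    [NormedSpace ℝ E] {s : Set E} {m : ℝ} {f : E → ℝ} (hf : StrongConvexOn s m f) {x₀ x : E}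
    (hmin : IsMinOn f s x₀) (hx₀ : x₀ ∈ s) (hx : x ∈ s) :
    m / 2 * ‖x - x₀‖ ^ 2 ≤ f x - f x₀ := by
  have hseg : ∀ a ∈ Set.Ioo (0 : ℝ) 1, a * (m / 2 * ‖x - x₀‖ ^ 2) ≤ f x - f x₀ := by
    rintro a ⟨ha₀, ha₁⟩
    have hconv := hf.2 hx hx₀ (sub_nonneg.2 ha₁.le) ha₀.le (sub_add_cancel 1 a)
    have hle : f x₀ ≤ f ((1 - a) • x + a • x₀) :=
      hmin (hf.1 hx hx₀ (sub_nonneg.2 ha₁.le) ha₀.le (sub_add_cancel 1 a))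
    simp only [smul_eq_mul] at hconv
    have hscaled : (1 - a) * (a * (m / 2 * ‖x - x₀‖ ^ 2)) ≤ (1 - a) * (f x - f x₀) := by linarith
    exact le_of_mul_le_mul_left hscaled (sub_pos.2 ha₁)
  have hlim : Filter.Tendsto (fun a : ℝ ↦ a * (m / 2 * ‖x - x₀‖ ^ 2)) (nhdsWithin 1 (Set.Iio 1))
      (nhds (m / 2 * ‖x - x₀‖ ^ 2)) := by
    simpa using (Filter.tendsto_id.mul_const (m / 2 * ‖x - x₀‖ ^ 2)).mono_left
      (nhdsWithin_le_nhds (a := (1 : ℝ)))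
  exact le_of_tendsto hlim (Filter.eventually_of_mem (Ioo_mem_nhdsLT zero_lt_one) hseg)

theorem sub_eq_smul_sum_of_succ_eq_sub_smul {R V : Type*} [Ring R] [AddCommGroup V] [Module R V]
    {n : ℕ} (γ : R) (y : ℕ → V) (u : Fin n → V) (hy : ∀ i : Fin n, y (i + 1) = y i - γ • u i) :
    y 0 - y n = γ • ∑ i, u i := by
  have hstep : ∀ i : Fin n, γ • u i = y i - y (i + 1) := fun i ↦ by rw [hy i]; abel
  rw [smul_sum, sum_congr rfl fun i _ ↦ hstep i,
    Fin.sum_univ_eq_sum_range (fun i ↦ y i - y (i + 1)), sum_range_sub']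

theorem integral_sum_inner_add {E Ω ι : Type*} [NormedAddCommGroup E] [InnerProductSpace ℝ E]
    [CompleteSpace E] [MeasurableSpace Ω] {P : Measure Ω} [IsProbabilityMeasure P]
    (s : Finset ι) (c : ι → E) {X : ι → Ω → E} (hX : ∀ i ∈ s, Integrable (X i) P) (v : E) :
    ∫ ω, ∑ i ∈ s, inner ℝ (c i + X i ω) v ∂P = ∑ i ∈ s, inner ℝ (c i + ∫ ω, X i ω ∂P) v := by
  have hXv : ∀ i ∈ s, Integrable (fun ω ↦ inner ℝ (X i ω) v) P := fun i hi ↦ by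
    simpa only [real_inner_comm v] using (hX i hi).const_inner v
  simp only [inner_add_left]
  have hint : ∀ i ∈ s, Integrable (fun ω ↦ inner ℝ (c i) v + inner ℝ (X i ω) v) P :=
    fun i hi ↦ (integrable_const _).add (hXv i hi)
  rw [integral_finsetSum s hint]
  refine sum_congr rfl fun i hi ↦ ?_
  rw [integral_add (integrable_const _) (hXv i hi), integral_const, probReal_univ, one_smul]
  simpa only [real_inner_comm v] using congrArg (inner ℝ (c i) v + ·) (integral_inner (hX i hi) v)

theorem sub_add_breg_le_inner_add_sq {d : ℕ} {φ : EuclideanSpace ℝ (Fin d) → ℝ}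
    {G : EuclideanSpace ℝ (Fin d) → EuclideanSpace ℝ (Fin d)} (hφ : ∀ x, HasGradientAt φ (G x) x)
    {L : ℝ} (hG : ∀ x y, ‖G x - G y‖ ≤ L * ‖x - y‖) (x z y : EuclideanSpace ℝ (Fin d)) :
    φ x - φ z + breg φ G z y ≤ inner ℝ (G y) (x - z) + L / 2 * ‖x - y‖ ^ 2 := by
  have hdescent := le_add_inner_add_sq_of_lipschitz_gradient hφ hG y x
  have hsplit : inner ℝ (G y) (x - z) = inner ℝ (G y) (x - y) - inner ℝ (G y) (z - y) := by
    rw [← inner_sub_right, sub_sub_sub_cancel_right]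
  rw [breg, hsplit]
  linarith

/-- Here `h m = h_{t,m}` are the shifts, `q m` is the compressor output `Q(g_{t,m} − h_{t,m})`,
`ĝ_{t,m} = h_{t,m} + q m` and `h* = ∇f(x*)`. -/
theorem diana_nastya_inner_product_bound_general
    {d M n : ℕ}
    (f : Fin M → Fin n → EuclideanSpace ℝ (Fin d) → ℝ)
    (g : Fin M → Fin n → EuclideanSpace ℝ (Fin d) → EuclideanSpace ℝ (Fin d))
    (hgrad : ∀ m i x, HasGradientAt (f m i) (g m i x) x)
    (Lmax : ℝ)
    (hsmooth : ∀ m i x y, ‖g m i x - g m i y‖ ≤ Lmax * ‖x - y‖)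
    -- f = (1/(Mn)) Σ_m Σ_j f_m^j is μ-strongly convex with unique minimizer x*
    (μ : ℝ)
    (fbar : EuclideanSpace ℝ (Fin d) → ℝ)
    (hfbar : fbar = fun x => ((M : ℝ) * n)⁻¹ * ∑ m, ∑ j, f m j x)
    (hsc : StrongConvexOn Set.univ μ fbar)
    (xstar : EuclideanSpace ℝ (Fin d))
    (hmin : ∀ y, fbar xstar ≤ fbar y)
    -- round t : current point `xt`, fixed permutations `π`, deterministic local steps
    (γ : ℝ) (hγ : 0 < γ)
    (xt : EuclideanSpace ℝ (Fin d)) (π : Fin M → Equiv.Perm (Fin n))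
    (y : Fin M → ℕ → EuclideanSpace ℝ (Fin d))
    (hy0 : ∀ m, y m 0 = xt)
    (hystep : ∀ m (i : Fin n), y m ((i : ℕ) + 1) = y m i - γ • g m (π m i) (y m i))
    -- fresh, independent compression randomness of the M workers at round t
    {Ω : Type*} [MeasurableSpace Ω] (P : Measure Ω) [IsProbabilityMeasure P]
    (q : Fin M → Ω → EuclideanSpace ℝ (Fin d))
    (hqmem : ∀ m, MemLp (q m) 2 P)
    (h : Fin M → EuclideanSpace ℝ (Fin d))
    (hstar : EuclideanSpace ℝ (Fin d))
    (hhstar : hstar = ((M : ℝ) * n)⁻¹ • ∑ m, ∑ j, g m j xstar)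
    -- `q m` is the compressor output `Q(g_{t,m} − h_{t,m})` (unbiased, relative variance `omg`)
    (hqmean : ∀ m, ∫ w, q m w ∂P = ((γ * n)⁻¹ : ℝ) • (xt - y m n) - h m)
    :
    -(∫ w, (M : ℝ)⁻¹ * ∑ m, (inner ℝ ((h m + q m w) - hstar) (xt - xstar) : ℝ) ∂P)
      ≤ -(μ / 4) * ‖xt - xstar‖ ^ 2 - (1 / 2) * (fbar xt - fbar xstar)
        - ((M : ℝ) * n)⁻¹ *
            ∑ m, ∑ i : Fin n, breg (f m (π m i)) (g m (π m i)) xstar (y m (i : ℕ))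
        + Lmax / (2 * M * n) * ∑ m, ∑ i : Fin n, ‖xt - y m (i : ℕ)‖ ^ 2 := by
  have hxstar : IsMinOn fbar Set.univ xstar := isMinOn_univ_iff.2 hmin
  have hstar_eq_zero : hstar = 0 := by
    have hgrad_fbar : HasGradientAt fbar hstar xstar := by
      rw [hfbar, hhstar]
      exact (HasGradientAt.fun_sum fun m _ ↦ .fun_sum fun j _ ↦ hgrad m j xstar).const_mul _
    exact (hxstar.isLocalMin Filter.univ_mem).hasGradientAt_eq_zero hgrad_fbar
  have hmean : ∀ m, h m + ∫ w, q m w ∂P = (n : ℝ)⁻¹ • ∑ i, g m (π m i) (y m i) := fun m ↦ by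
    rw [hqmean, add_sub_cancel, ← hy0 m, sub_eq_smul_sum_of_succ_eq_sub_smul γ (y m) _ (hystep m),
      smul_smul, mul_inv_rev, mul_assoc, inv_mul_cancel₀ hγ.ne', mul_one]
  have hexpect : ∫ w, (M : ℝ)⁻¹ * ∑ m, (inner ℝ ((h m + q m w) - hstar) (xt - xstar) : ℝ) ∂P
      = ((M : ℝ) * n)⁻¹ * ∑ m, ∑ i, inner ℝ (g m (π m i) (y m i)) (xt - xstar) := by
    simp only [hstar_eq_zero, sub_zero]
    rw [integral_const_mul, integral_sum_inner_add univ h fun m _ ↦ (hqmem m).integrable one_le_two]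
    simp only [hmean, real_inner_smul_left, sum_inner, ← mul_sum, mul_inv]
    ring
  have hsum := sum_le_sum fun m (_ : m ∈ univ) ↦ sum_le_sum fun i (_ : i ∈ univ) ↦
    sub_add_breg_le_inner_add_sq (hgrad m (π m i)) (hsmooth m (π m i)) xt xstar (y m i)
  simp only [sum_add_distrib, sum_sub_distrib, ← mul_sum,
    fun m x ↦ Equiv.sum_comp (π m) (fun j ↦ f m j x)] at hsum
  have hgap : fbar xt - fbar xstar
      = ((M : ℝ) * n)⁻¹ * (∑ m, ∑ j, f m j xt - ∑ m, ∑ j, f m j xstar) := by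
    rw [hfbar]; ring
  have hgrowth := hsc.half_mul_sq_norm_sub_le_of_isMinOn hxstar (Set.mem_univ _) (Set.mem_univ xt)
  have hscaled := mul_le_mul_of_nonneg_left hsum (by positivity : (0 : ℝ) ≤ ((M : ℝ) * n)⁻¹)
  rw [hexpect]
  linear_combination hscaled + (1 / 2) * hgrowth + hgap

/-- **inner-product bound for DIANA-NASTYA.**
Here `h m = h_{t,m}` are the (fixed) shifts, `q m` is the compressor output
`Q(g_{t,m} − h_{t,m})`, `ĝ_{t,m} = h_{t,m} + q m` and `h* = ∇f(x*)`.  -/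
theorem diana_nastya_inner_product_bound
    {d M n : ℕ} (hM : 0 < M) (hn : 0 < n)
    (f : Fin M → Fin n → EuclideanSpace ℝ (Fin d) → ℝ)
    (g : Fin M → Fin n → EuclideanSpace ℝ (Fin d) → EuclideanSpace ℝ (Fin d))
    (hgrad : ∀ m i x, HasGradientAt (f m i) (g m i x) x)
    (hconv : ∀ m i, ConvexOn ℝ Set.univ (f m i))
    (Lmax : ℝ)
    (hsmooth : ∀ m i x y, ‖g m i x - g m i y‖ ≤ Lmax * ‖x - y‖)
    (omg : ℝ) (homg : 0 < omg)
    -- f = (1/(Mn)) Σ_m Σ_j f_m^j is μ-strongly convex with unique minimizer x*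
    (μ : ℝ) (hμ : 0 < μ)
    (fbar : EuclideanSpace ℝ (Fin d) → ℝ)
    (hfbar : fbar = fun x => ((M : ℝ) * n)⁻¹ * ∑ m, ∑ j, f m j x)
    (hsc : StrongConvexOn Set.univ μ fbar)
    (xstar : EuclideanSpace ℝ (Fin d))
    (hmin : ∀ y, fbar xstar ≤ fbar y)
    (huniq : ∀ y, (∀ z, fbar y ≤ fbar z) → y = xstar)
    -- round t : current point `xt`, fixed permutations `π`, deterministic local steps
    (γ : ℝ) (hγ : 0 < γ)
    (xt : EuclideanSpace ℝ (Fin d)) (π : Fin M → Equiv.Perm (Fin n))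
    (y : Fin M → ℕ → EuclideanSpace ℝ (Fin d))
    (hy0 : ∀ m, y m 0 = xt)
    (hystep : ∀ m (i : Fin n), y m ((i : ℕ) + 1) = y m i - γ • g m (π m i) (y m i))
    -- fresh, independent compression randomness of the M workers at round t
    {Ω : Type*} [MeasurableSpace Ω] (P : Measure Ω) [IsProbabilityMeasure P]
    (q : Fin M → Ω → EuclideanSpace ℝ (Fin d))
    (hqmem : ∀ m, MemLp (q m) 2 P)
    (hqindep : iIndepFun
      (m := fun _ : Fin M => (inferInstance : MeasurableSpace (EuclideanSpace ℝ (Fin d)))) q P)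
    (h : Fin M → EuclideanSpace ℝ (Fin d))
    (hstar : EuclideanSpace ℝ (Fin d))
    (hhstar : hstar = ((M : ℝ) * n)⁻¹ • ∑ m, ∑ j, g m j xstar)
    -- `q m` is the compressor output `Q(g_{t,m} − h_{t,m})` (unbiased, relative variance `omg`)
    (hqmean : ∀ m, ∫ w, q m w ∂P = ((γ * n)⁻¹ : ℝ) • (xt - y m n) - h m)
    (hqvar : ∀ m, ∫ w, ‖q m w - (((γ * n)⁻¹ : ℝ) • (xt - y m n) - h m)‖ ^ 2 ∂P ≤ omg * ‖((γ * n)⁻¹ : ℝ) • (xt - y m n) - h m‖ ^ 2)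
    :
    -(∫ w, (M : ℝ)⁻¹ * ∑ m, (inner ℝ ((h m + q m w) - hstar) (xt - xstar) : ℝ) ∂P)
      ≤ -(μ / 4) * ‖xt - xstar‖ ^ 2 - (1 / 2) * (fbar xt - fbar xstar)
        - ((M : ℝ) * n)⁻¹ *
            ∑ m, ∑ i : Fin n, breg (f m (π m i)) (g m (π m i)) xstar (y m (i : ℕ))
        + Lmax / (2 * M * n) * ∑ m, ∑ i : Fin n, ‖xt - y m (i : ℕ)‖ ^ 2 :=
  diana_nastya_inner_product_bound_general f g hgrad Lmax hsmooth μ fbar hfbar hsc xstar hmin γ hγ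
    xt π y hy0 hystep P q hqmem h hstar hhstar hqmean
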